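/- Let α ∈ (0,1]. Then the function F(t) = α(1 + t²) + (1 − α)·φ(t) on [0,∞), where φ(t) = √(2/π) ∫_t^∞ (x − t)² exp(−x²/2) dx, attains its minimum at a point ω* ≥ 0, and ω* is the unique nonnegative solution of the equation α·ω* = (1 − α)·√(2/π) ∫_{ω*}^∞ (x − ω*)·exp(−x²/2) dx. In particular, the minimizer depends only on α. -/

import Mathlib

/-!
Write `Q t = ∫_t^∞ e^{-x²/2} dx` and `ψ t = ∫_t^∞ (x - t) e^{-x²/2} dx`. Integrating
`x e^{-x²/2}` and `x² e^{-x²/2}` by parts gives `ψ = e^{-t²/2} - t Q` and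
`φ / √(2/π) = (1 + t²) Q - t e^{-t²/2}`, hence `φ' = -2 √(2/π) ψ` and `ψ' = -Q`.
So the objective `F` has `F' = 2 R` with `R t = α t - (1 - α) √(2/π) ψ t`, and
`R' = α + (1 - α) √(2/π) Q > 0`. As `R 0 ≤ 0` and `0 ≤ ψ ≤ 1` on `[0, ∞)`, `R` has exactly one
zero `ω`, which is nonnegative, and `F` decreases before `ω` and increases after it.
-/

open MeasureTheory ProbabilityTheory
open scoped Pointwise BigOperators

noncomputable section

/-- `phi t = sqrt(2/pi) * int_t^infty (x-t)^2 exp(-x^2/2) dx`. -/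
def phi (t : ℝ) : ℝ :=
  Real.sqrt (2 / Real.pi) * ∫ x in Set.Ioi t, (x - t) ^ 2 * Real.exp (-x ^ 2 / 2)

open Real Set Filter

theorem integral_Ioi_of_hasDerivAt_of_integrableOn {E : Type*} [NormedAddCommGroup E]
    [NormedSpace ℝ E] [CompleteSpace E] {f f' : ℝ → E} {a : ℝ}
    (hderiv : ∀ x ∈ Ici a, HasDerivAt f (f' x) x) (f'int : IntegrableOn f' (Ioi a))
    (fint : IntegrableOn f (Ioi a)) : ∫ x in Ioi a, f' x = -f a := by
  simpa using integral_Ioi_of_hasDerivAt_of_tendsto' hderiv f'int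
    (tendsto_zero_of_hasDerivAt_of_integrableOn_Ioi (fun x hx ↦ hderiv x hx.out.le) f'int fint)

theorem hasDerivAt_integral_Ioi {E : Type*} [NormedAddCommGroup E] [NormedSpace ℝ E]
    [CompleteSpace E] {f : ℝ → E} {t : ℝ} (hf : Integrable f) (hft : ContinuousAt f t) :
    HasDerivAt (fun u ↦ ∫ x in Ioi u, f x) (-f t) t := by
  have hsplit : (fun u ↦ ∫ x in Ioi u, f x) = fun u ↦ (∫ x in Ioi t, f x) - ∫ x in t..u, f x :=
    funext fun u ↦ eq_sub_of_add_eq'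
      (intervalIntegral.integral_interval_add_Ioi hf.integrableOn hf.integrableOn)
  rw [hsplit]
  exact (intervalIntegral.integral_hasDerivAt_right hf.intervalIntegrable
    hf.aestronglyMeasurable.stronglyMeasurableAtFilter hft).const_sub _

theorem isMinOn_univ_of_hasDerivAt_of_monotone {f f' : ℝ → ℝ} {b : ℝ}
    (hf : ∀ x, HasDerivAt f (f' x) x) (hf' : Monotone f') (hb : f' b = 0) :
    IsMinOn f univ b := by
  have hdiff (s : Set ℝ) : DifferentiableOn ℝ f s :=
    fun x _ ↦ (hf x).differentiableAt.differentiableWithinAt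
  refine isMinOn_univ_of_deriv (hf b).continuousAt (hdiff _) (hdiff _) ?_ ?_ <;>
    intro x hx <;> rw [(hf x).deriv, ← hb] <;> exact hf' (le_of_lt hx)

theorem integrable_pow_mul_exp_neg_sq_div_two (n : ℕ) :
    Integrable fun x : ℝ ↦ x ^ n * exp (-x ^ 2 / 2) := by
  have h := integrable_rpow_mul_exp_neg_mul_sq (b := 1 / 2) (by norm_num)
    (s := n) (by linarith [n.cast_nonneg (α := ℝ)])
  refine h.congr (Eventually.of_forall fun x ↦ ?_)
  simp only [rpow_natCast]
  ring_nf

theorem integrable_exp_neg_sq_div_two : Integrable fun x : ℝ ↦ exp (-x ^ 2 / 2) := by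
  simpa using integrable_pow_mul_exp_neg_sq_div_two 0

theorem integrable_mul_exp_neg_sq_div_two : Integrable fun x : ℝ ↦ x * exp (-x ^ 2 / 2) := by
  simpa using integrable_pow_mul_exp_neg_sq_div_two 1

theorem hasDerivAt_exp_neg_sq_div_two (x : ℝ) :
    HasDerivAt (fun x ↦ exp (-x ^ 2 / 2)) (-x * exp (-x ^ 2 / 2)) x := by
  have h : HasDerivAt (fun x : ℝ ↦ -x ^ 2 / 2) (-x) x :=
    ((hasDerivAt_pow 2 x).fun_neg.div_const 2).congr_deriv (by ring)
  exact h.exp.congr_deriv (by ring)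

def gaussTail (t : ℝ) : ℝ := ∫ x in Ioi t, exp (-x ^ 2 / 2)

theorem gaussTail_nonneg (t : ℝ) : 0 ≤ gaussTail t :=
  setIntegral_nonneg measurableSet_Ioi fun _ _ ↦ (exp_pos _).le

theorem hasDerivAt_gaussTail (t : ℝ) : HasDerivAt gaussTail (-exp (-t ^ 2 / 2)) t :=
  hasDerivAt_integral_Ioi integrable_exp_neg_sq_div_two (by fun_prop)

theorem integral_Ioi_mul_exp_neg_sq_div_two (t : ℝ) :
    ∫ x in Ioi t, x * exp (-x ^ 2 / 2) = exp (-t ^ 2 / 2) := by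
  have hderiv (x : ℝ) : HasDerivAt (fun x ↦ -exp (-x ^ 2 / 2)) (x * exp (-x ^ 2 / 2)) x := by
    simpa using (hasDerivAt_exp_neg_sq_div_two x).fun_neg
  simpa using integral_Ioi_of_hasDerivAt_of_integrableOn (fun x _ ↦ hderiv x)
    integrable_mul_exp_neg_sq_div_two.integrableOn
    integrable_exp_neg_sq_div_two.neg.integrableOn

theorem integral_Ioi_sq_mul_exp_neg_sq_div_two (t : ℝ) :
    ∫ x in Ioi t, x ^ 2 * exp (-x ^ 2 / 2) = t * exp (-t ^ 2 / 2) + gaussTail t := by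
  have hderiv (x : ℝ) : HasDerivAt (fun x ↦ -(x * exp (-x ^ 2 / 2)))
      (x ^ 2 * exp (-x ^ 2 / 2) - exp (-x ^ 2 / 2)) x :=
    ((hasDerivAt_id' x).fun_mul (hasDerivAt_exp_neg_sq_div_two x)).fun_neg.congr_deriv (by ring)
  have h := integral_Ioi_of_hasDerivAt_of_integrableOn (a := t) (fun x _ ↦ hderiv x)
    ((integrable_pow_mul_exp_neg_sq_div_two 2).sub integrable_exp_neg_sq_div_two).integrableOn
    integrable_mul_exp_neg_sq_div_two.neg.integrableOn
  rw [integral_sub (integrable_pow_mul_exp_neg_sq_div_two 2).integrableOn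
    integrable_exp_neg_sq_div_two.integrableOn] at h
  rw [gaussTail]
  linarith

def gaussLoss (t : ℝ) : ℝ := ∫ x in Ioi t, (x - t) * exp (-x ^ 2 / 2)

theorem gaussLoss_eq (t : ℝ) : gaussLoss t = exp (-t ^ 2 / 2) - t * gaussTail t := by
  simp_rw [gaussLoss, sub_mul]
  rw [integral_sub integrable_mul_exp_neg_sq_div_two.integrableOn
    (integrable_exp_neg_sq_div_two.const_mul t).integrableOn, integral_const_mul,
    integral_Ioi_mul_exp_neg_sq_div_two, gaussTail]

theorem gaussLoss_nonneg (t : ℝ) : 0 ≤ gaussLoss t :=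
  setIntegral_nonneg measurableSet_Ioi fun _ hx ↦
    mul_nonneg (sub_nonneg.2 (le_of_lt hx)) (exp_pos _).le

theorem gaussLoss_le_one {t : ℝ} (ht : 0 ≤ t) : gaussLoss t ≤ 1 := by
  have : exp (-t ^ 2 / 2) ≤ 1 := exp_le_one_iff.2 (by nlinarith)
  rw [gaussLoss_eq]
  nlinarith [gaussTail_nonneg t]

theorem hasDerivAt_gaussLoss (t : ℝ) : HasDerivAt gaussLoss (-gaussTail t) t := by
  rw [show gaussLoss = fun t ↦ exp (-t ^ 2 / 2) - t * gaussTail t from funext gaussLoss_eq]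
  exact ((hasDerivAt_exp_neg_sq_div_two t).sub
    ((hasDerivAt_id' t).mul (hasDerivAt_gaussTail t))).congr_deriv (by ring)

theorem integral_Ioi_sub_sq_mul_exp_neg_sq_div_two (t : ℝ) :
    ∫ x in Ioi t, (x - t) ^ 2 * exp (-x ^ 2 / 2) =
      (1 + t ^ 2) * gaussTail t - t * exp (-t ^ 2 / 2) := by
  have hsplit (x : ℝ) : (x - t) ^ 2 * exp (-x ^ 2 / 2) =
      (x ^ 2 * exp (-x ^ 2 / 2) - 2 * t * (x * exp (-x ^ 2 / 2))) + t ^ 2 * exp (-x ^ 2 / 2) := by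
    ring
  have hx2 := (integrable_pow_mul_exp_neg_sq_div_two 2).integrableOn (s := Ioi t)
  have hx := (integrable_mul_exp_neg_sq_div_two.const_mul (2 * t)).integrableOn (s := Ioi t)
  have h1 := (integrable_exp_neg_sq_div_two.const_mul (t ^ 2)).integrableOn (s := Ioi t)
  simp_rw [hsplit]
  rw [integral_add (hx2.sub' hx) h1, integral_sub hx2 hx, integral_const_mul, integral_const_mul,
    integral_Ioi_sq_mul_exp_neg_sq_div_two, integral_Ioi_mul_exp_neg_sq_div_two, ← gaussTail]
  ring

theorem hasDerivAt_phi (t : ℝ) : HasDerivAt phi (-2 * √(2 / π) * gaussLoss t) t := by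
  have hphi : phi = fun t ↦ √(2 / π) * ((1 + t ^ 2) * gaussTail t - t * exp (-t ^ 2 / 2)) :=
    funext fun t ↦ by rw [phi, integral_Ioi_sub_sq_mul_exp_neg_sq_div_two]
  have hsq : HasDerivAt (fun t : ℝ ↦ 1 + t ^ 2) (2 * t) t :=
    ((hasDerivAt_pow 2 t).const_add 1).congr_deriv (by ring)
  rw [hphi, gaussLoss_eq]
  exact (((hsq.mul (hasDerivAt_gaussTail t)).sub ((hasDerivAt_id' t).mul
    (hasDerivAt_exp_neg_sq_div_two t))).const_mul _).congr_deriv (by ring)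

def optimalityResidual (α t : ℝ) : ℝ := α * t - (1 - α) * √(2 / π) * gaussLoss t

theorem hasDerivAt_objective (α t : ℝ) :
    HasDerivAt (fun t ↦ α * (1 + t ^ 2) + (1 - α) * phi t) (2 * optimalityResidual α t) t :=
  ((((hasDerivAt_pow 2 t).const_add 1).const_mul α).add
    ((hasDerivAt_phi t).const_mul (1 - α))).congr_deriv (by rw [optimalityResidual]; ring)

theorem hasDerivAt_optimalityResidual (α t : ℝ) :
    HasDerivAt (optimalityResidual α) (α + (1 - α) * √(2 / π) * gaussTail t) t :=
  (((hasDerivAt_id' t).const_mul α).sub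
    ((hasDerivAt_gaussLoss t).const_mul ((1 - α) * √(2 / π)))).congr_deriv (by ring)

theorem optimalityResidual_strictMono {α : ℝ} (h₀ : 0 < α) (h₁ : α ≤ 1) :
    StrictMono (optimalityResidual α) := by
  refine strictMono_of_deriv_pos fun t ↦ ?_
  rw [(hasDerivAt_optimalityResidual α t).deriv]
  have := mul_nonneg (mul_nonneg (sub_nonneg.2 h₁) (sqrt_nonneg (2 / π))) (gaussTail_nonneg t)
  linarith

theorem exists_optimalityResidual_eq_zero {α : ℝ} (h₀ : 0 < α) (h₁ : α ≤ 1) :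
    ∃ ω, 0 ≤ ω ∧ optimalityResidual α ω = 0 := by
  have hc : 0 ≤ (1 - α) * √(2 / π) := mul_nonneg (sub_nonneg.2 h₁) (sqrt_nonneg _)
  set T := (1 - α) * √(2 / π) / α
  have hT : 0 ≤ T := div_nonneg hc h₀.le
  have hres0 : optimalityResidual α 0 ≤ 0 := by
    simpa [optimalityResidual] using mul_nonneg hc (gaussLoss_nonneg 0)
  have hresT : 0 ≤ optimalityResidual α T := by
    have hαT : α * T = (1 - α) * √(2 / π) := mul_div_cancel₀ _ h₀.ne'
    rw [optimalityResidual, hαT]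
    nlinarith [gaussLoss_le_one hT]
  have hcont : Continuous (optimalityResidual α) :=
    continuous_iff_continuousAt.2 fun t ↦ (hasDerivAt_optimalityResidual α t).continuousAt
  obtain ⟨ω, hω, hω0⟩ := intermediate_value_Icc hT hcont.continuousOn ⟨hres0, hresT⟩
  exact ⟨ω, hω.1, hω0⟩

theorem optimal_weight_characterization (α : ℝ) (h₀ : 0 < α) (h₁ : α ≤ 1) :
    ∃ ω : ℝ, 0 ≤ ω ∧
      (∀ t, 0 ≤ t →
        α * (1 + ω ^ 2) + (1 - α) * phi ω ≤ α * (1 + t ^ 2) + (1 - α) * phi t) ∧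
      (∀ t, 0 ≤ t →
        (α * t = (1 - α) * Real.sqrt (2 / Real.pi) *
            ∫ x in Set.Ioi t, (x - t) * Real.exp (-x ^ 2 / 2) ↔ t = ω)) := by
  obtain ⟨ω, hω, hres⟩ := exists_optimalityResidual_eq_zero h₀ h₁
  have hmono := optimalityResidual_strictMono h₀ h₁
  have hmin := isMinOn_univ_of_hasDerivAt_of_monotone (hasDerivAt_objective α)
    (fun _ _ h ↦ mul_le_mul_of_nonneg_left (hmono.monotone h) zero_le_two) (by rw [hres, mul_zero])
  refine ⟨ω, hω, fun t _ ↦ hmin (mem_univ t), fun t _ ↦ ?_⟩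
  rw [← sub_eq_zero]
  exact ⟨fun h ↦ hmono.injective (h.trans hres.symm), fun h ↦ h ▸ hres⟩

end
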